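/- Let A be an n×n real symmetric positive semidefinite matrix with eigenvalues λ₁ ≥ ⋯ ≥ λ_n, let μ > 0, and define the effective dimension d_eff(μ) = ∑_{j=1}^{n} λ_j/(λ_j+μ). If an index k with 1 ≤ k ≤ n satisfies k ≥ d_eff(μ), then (1/k)·∑_{j>k} λ_j ≤ (d_eff(μ)/k)·μ, i.e., ∑_{j=k+1}^{n} λ_j ≤ d_eff(μ)·μ. -/

import Mathlib

open Matrix MeasureTheory ProbabilityTheory
open scoped Classical

/-- Moore–Penrose pseudoinverse (characterized by the four Penrose conditions). -/
noncomputable def pinv {m n : ℕ} (A : Matrix (Fin m) (Fin n) ℝ) : Matrix (Fin n) (Fin m) ℝ :=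
  if h : ∃ B : Matrix (Fin n) (Fin m) ℝ,
      A * B * A = A ∧ B * A * B = B ∧ (A * B)ᵀ = A * B ∧ (B * A)ᵀ = B * A
  then h.choose else 0

/-- Nyström approximation of `A` with respect to the test matrix `X`. -/
noncomputable def nystrom {n l : ℕ} (A : Matrix (Fin n) (Fin n) ℝ)
    (X : Matrix (Fin n) (Fin l) ℝ) : Matrix (Fin n) (Fin n) ℝ :=
  A * X * pinv (Xᵀ * A * X) * (A * X)ᵀ

/-- Spectral (ℓ² operator) norm of a matrix. -/
noncomputable def specNorm {m n : ℕ} (M : Matrix (Fin m) (Fin n) ℝ) : ℝ :=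
  ‖LinearMap.toContinuousLinearMap (Matrix.toEuclideanLin M)‖

/-- Frobenius norm of a matrix. -/
noncomputable def frobNorm {m n : ℕ} (M : Matrix (Fin m) (Fin n) ℝ) : ℝ :=
  Real.sqrt (∑ i, ∑ j, (M i j) ^ 2)

/-- Euclidean norm of a vector. -/
noncomputable def euclNorm {n : ℕ} (x : Fin n → ℝ) : ℝ :=
  Real.sqrt (∑ i, (x i) ^ 2)

/-- Law of an `n × l` random matrix with independent standard normal entries. -/
noncomputable def gaussianEnsemble (n l : ℕ) : Measure (Fin n → Fin l → ℝ) :=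
  Measure.pi fun _ => Measure.pi fun _ => gaussianReal 0 1

/-- The psd square root of a psd matrix (junk value `0` otherwise). -/
noncomputable def matSqrt {n : ℕ} (M : Matrix (Fin n) (Fin n) ℝ) : Matrix (Fin n) (Fin n) ℝ :=
  if hM : M.PosSemidef then
    (hM.1.eigenvectorUnitary : Matrix (Fin n) (Fin n) ℝ) *
      diagonal ((↑) ∘ Real.sqrt ∘ hM.1.eigenvalues) *
      (star (hM.1.eigenvectorUnitary : Matrix (Fin n) (Fin n) ℝ))
  else 0

/-- ℓ² condition number of a symmetric matrix: ratio of the largest to the smallest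
eigenvalue (junk value `0` for non-symmetric matrices). -/
noncomputable def kappa {n : ℕ} (M : Matrix (Fin n) (Fin n) ℝ) : ℝ :=
  if hM : M.IsHermitian then (⨆ i, hM.eigenvalues i) / (⨅ i, hM.eigenvalues i) else 0

/-!
Write `f j = λ_j / (λ_j + μ) ∈ [0, 1]`, so that `λ_j = λ_j f_j + μ f_j` and
`λ_j (1 - f_j) = μ f_j`. The hypothesis `∑ f ≤ k` says that the tail mass `∑_{j > k} f_j` is at
most the head deficit `∑_{j ≤ k} (1 - f_j)`. Since every tail eigenvalue is at most every head
eigenvalue, `∑_{j > k} λ_j f_j ≤ ∑_{j ≤ k} λ_j (1 - f_j) = μ ∑_{j ≤ k} f_j`, and adding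
`μ ∑_{j > k} f_j` to both sides gives the claim.
-/

open Finset

theorem nonneg_of_posSemidef_of_eq_mul_diagonal_mul_transpose {m : Type*} [Fintype m]
    [DecidableEq m] {A V : Matrix m m ℝ} {d : m → ℝ} (hA : A.PosSemidef) (hV : Vᵀ * V = 1)
    (hdecomp : A = V * diagonal d * Vᵀ) (i : m) : 0 ≤ d i := by
  have hconj : Vᵀ * A * V = diagonal d := by
    rw [hdecomp, ← Matrix.mul_assoc, ← Matrix.mul_assoc, hV, Matrix.one_mul, Matrix.mul_assoc,
      hV, Matrix.mul_one]
  have hpsd : (Vᵀ * A * V).PosSemidef := by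
    simpa only [conjTranspose_eq_transpose_of_trivial] using hA.conjTranspose_mul_mul_same V
  rw [hconj] at hpsd
  exact posSemidef_diagonal_iff.mp hpsd i

theorem Finset.sum_mul_le_sum_mul_of_forall_le {ι : Type*} {s t : Finset ι} {x a b : ι → ℝ}
    (hx : ∀ i, 0 ≤ x i) (ha : ∀ i ∈ s, 0 ≤ a i) (hb : ∀ j ∈ t, 0 ≤ b j)
    (hab : ∑ j ∈ t, b j ≤ ∑ i ∈ s, a i) (hdom : ∀ i ∈ s, ∀ j ∈ t, x j ≤ x i) :
    ∑ j ∈ t, x j * b j ≤ ∑ i ∈ s, x i * a i := by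
  rcases t.eq_empty_or_nonempty with rfl | ht
  · simpa using sum_nonneg fun i hi => mul_nonneg (hx i) (ha i hi)
  set c := t.sup' ht x
  calc ∑ j ∈ t, x j * b j ≤ ∑ j ∈ t, c * b j :=
        sum_le_sum fun j hj => mul_le_mul_of_nonneg_right (t.le_sup' x hj) (hb j hj)
    _ ≤ ∑ i ∈ s, c * a i := by
        rw [← mul_sum, ← mul_sum]
        exact mul_le_mul_of_nonneg_left hab ((hx _).trans (t.le_sup' x ht.choose_spec))
    _ ≤ ∑ i ∈ s, x i * a i :=
        sum_le_sum fun i hi => mul_le_mul_of_nonneg_right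
          (sup'_le ht x fun j hj => hdom i hi j hj) (ha i hi)

noncomputable def effectiveDimension {ι : Type*} [Fintype ι] (lam : ι → ℝ) (μ : ℝ) : ℝ :=
  ∑ i, lam i / (lam i + μ)

section Ratio

variable {x μ : ℝ}

theorem div_add_le_one (hx : 0 ≤ x) (hμ : 0 < μ) : x / (x + μ) ≤ 1 :=
  div_le_one_of_le₀ (by linarith) (by linarith)

theorem eq_mul_div_add_add_mul_div_add (hxμ : x + μ ≠ 0) :
    x = x * (x / (x + μ)) + μ * (x / (x + μ)) := by
  rw [← add_mul, mul_div_cancel₀ x hxμ]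

theorem mul_one_sub_div_add (hxμ : x + μ ≠ 0) : x * (1 - x / (x + μ)) = μ * (x / (x + μ)) := by
  field_simp
  ring

end Ratio

theorem sum_compl_le_effectiveDimension_mul {ι : Type*} [Fintype ι] [DecidableEq ι]
    {lam : ι → ℝ} {μ : ℝ} (hμ : 0 < μ) (hlam : ∀ i, 0 ≤ lam i) {s : Finset ι}
    (hdom : ∀ i ∈ s, ∀ j ∈ sᶜ, lam j ≤ lam i) (hcard : effectiveDimension lam μ ≤ #s) :
    ∑ j ∈ sᶜ, lam j ≤ effectiveDimension lam μ * μ := by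
  set f := fun i => lam i / (lam i + μ)
  have hpos : ∀ i, 0 < lam i + μ := fun i => by linarith [hlam i]
  have hne : ∀ i, lam i + μ ≠ 0 := fun i => (hpos i).ne'
  have hmass : ∑ j ∈ sᶜ, f j ≤ ∑ i ∈ s, (1 - f i) := by
    have hsplit := sum_add_sum_compl s f
    rw [sum_sub_distrib, sum_const, nsmul_one]
    unfold effectiveDimension at hcard
    linarith
  have hweighted : ∑ j ∈ sᶜ, lam j * f j ≤ ∑ i ∈ s, lam i * (1 - f i) :=
    sum_mul_le_sum_mul_of_forall_le hlam
      (fun i _ => sub_nonneg.mpr (div_add_le_one (hlam i) hμ))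
      (fun j _ => div_nonneg (hlam j) (hpos j).le) hmass hdom
  calc ∑ j ∈ sᶜ, lam j = ∑ j ∈ sᶜ, lam j * f j + μ * ∑ j ∈ sᶜ, f j := by
        rw [mul_sum, ← sum_add_distrib]
        exact sum_congr rfl fun j _ => eq_mul_div_add_add_mul_div_add (hne j)
    _ ≤ ∑ i ∈ s, lam i * (1 - f i) + μ * ∑ j ∈ sᶜ, f j := by gcongr
    _ = μ * ∑ i ∈ s, f i + μ * ∑ j ∈ sᶜ, f j := by
        congr 1
        rw [mul_sum]
        exact sum_congr rfl fun i _ => mul_one_sub_div_add (hne i)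
    _ = effectiveDimension lam μ * μ := by
        rw [← mul_add, sum_add_sum_compl, mul_comm]
        rfl

/-- The paper's tail `j > k` (1-indexed) is `j ≥ k` in 0-indexed `Fin n`. -/
theorem effective_dimension_tail_bound_general {n : ℕ}
    (A : Matrix (Fin n) (Fin n) ℝ) (hA : A.PosSemidef)
    (lam : Fin n → ℝ) (hanti : Antitone lam)
    (V : Matrix (Fin n) (Fin n) ℝ) (hV : Vᵀ * V = 1)
    (hdecomp : A = V * Matrix.diagonal lam * Vᵀ)
    (μ : ℝ) (hμ : 0 < μ)
    (k : ℕ)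
    (hk : ∑ i, lam i / (lam i + μ) ≤ (k : ℝ)) :
    ∑ j ∈ Finset.univ.filter (fun j : Fin n => k ≤ (j : ℕ)), lam j
      ≤ (∑ i, lam i / (lam i + μ)) * μ := by
  have hlam := nonneg_of_posSemidef_of_eq_mul_diagonal_mul_transpose hA hV hdecomp
  set head : Finset (Fin n) := {i | (i : ℕ) < k}
  have htail : headᶜ = ({j | k ≤ (j : ℕ)} : Finset (Fin n)) := by
    ext j
    simp [head]
  have hcard : effectiveDimension lam μ ≤ #head := by
    have hle_n : effectiveDimension lam μ ≤ n := by
      unfold effectiveDimension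
      simpa using sum_le_card_nsmul univ _ 1 fun i _ => div_add_le_one (hlam i) hμ
    rw [Fin.card_filter_val_lt, Nat.cast_min]
    exact le_min hle_n hk
  have hdom : ∀ i ∈ head, ∀ j ∈ headᶜ, lam j ≤ lam i := by
    intro i hi j hj
    simp only [head, htail, mem_filter, mem_univ, true_and] at hi hj
    exact hanti (Fin.le_def.mpr (by omega))
  rw [← htail]
  exact sum_compl_le_effectiveDimension_mul hμ hlam hdom hcard

/-- If `k ≥ d_eff(μ)` then `∑_{j>k} λ_j ≤ d_eff(μ)·μ`
(1-indexed: the tail `j > k` corresponds to 0-indexed indices `≥ k`). -/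
theorem effective_dimension_tail_bound {n : ℕ}
    (A : Matrix (Fin n) (Fin n) ℝ) (hA : A.PosSemidef)
    (lam : Fin n → ℝ) (hanti : Antitone lam)
    (V : Matrix (Fin n) (Fin n) ℝ) (hV : Vᵀ * V = 1)
    (hdecomp : A = V * Matrix.diagonal lam * Vᵀ)
    (μ : ℝ) (hμ : 0 < μ)
    (k : ℕ) (hk1 : 1 ≤ k) (hkn : k ≤ n)
    (hk : ∑ i, lam i / (lam i + μ) ≤ (k : ℝ)) :
    ∑ j ∈ Finset.univ.filter (fun j : Fin n => k ≤ (j : ℕ)), lam j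
      ≤ (∑ i, lam i / (lam i + μ)) * μ :=
  effective_dimension_tail_bound_general A hA lam hanti V hV hdecomp μ hμ k hk
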